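/- The map g : S^3 → S^3 defined by g(z) = √j · j z j⁻¹ (with √j = (1+j)/√2) acts freely: for every z ∈ S^3 and every k with 1 ≤ k ≤ 7, g^k(z) ≠ z. -/

import Mathlib

noncomputable section

/-- The quaternion `j`. -/
def qj : Quaternion ℝ := ⟨0, 0, 1, 0⟩

/-- The quaternion `√j = (1 + j)/√2`. -/
def sqrtj : Quaternion ℝ := (1 + qj) / ((Real.sqrt 2 : ℝ) : Quaternion ℝ)

/-- The map `g : z ↦ √j · (j z j⁻¹)`. -/
def g (z : Quaternion ℝ) : Quaternion ℝ := sqrtj * (qj * z * qj⁻¹)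

/-!
Split `ℍ = ℝ⟨1, j⟩ ⊕ ℝ⟨i, k⟩` and read both planes as copies of `ℂ`. Conjugation by `j` fixes
the first plane and negates the second, and left multiplication by `√j` rotates the first plane
by `π/4` and the second by `-π/4`. So `g` acts as `(w₁, w₂) ↦ (ζ w₁, ζ³ w₂)` with `ζ = e^{iπ/4}`
a primitive 8th root of unity, and `g^k` as `(ζ^k w₁, ζ^{3k} w₂)`. For `1 ≤ k ≤ 7` neither `k`
nor `3k` is divisible by `8`, so the only fixed point of `g^k` is `0`.
-/

open Complex

@[simp] theorem qj_re : qj.re = 0 := rfl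
@[simp] theorem qj_imI : qj.imI = 0 := rfl
@[simp] theorem qj_imJ : qj.imJ = 1 := rfl
@[simp] theorem qj_imK : qj.imK = 0 := rfl

section
open Quaternion

theorem qj_inv : qj⁻¹ = -qj :=
  inv_eq_of_mul_eq_one_right <| by
    ext <;> simp [re_mul, imI_mul, imJ_mul, imK_mul, re_one, imI_one, imJ_one, imK_one]

theorem g_eq (z : Quaternion ℝ) :
    g z = ⟨(z.re - z.imJ) / Real.sqrt 2, (-z.imI - z.imK) / Real.sqrt 2,
      (z.re + z.imJ) / Real.sqrt 2, (z.imI - z.imK) / Real.sqrt 2⟩ := by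
  rw [g, qj_inv, sqrtj, div_eq_mul_inv]
  ext <;> simp [← coe_inv, re_mul, imI_mul, imJ_mul, imK_mul, re_one, imI_one, imJ_one,
    imK_one] <;> ring

end

theorem IsPrimitiveRoot.eq_zero_of_pow_mul_eq_self {R : Type*} [CommRing R] [NoZeroDivisors R]
    {ζ w : R} {n k : ℕ} (hζ : IsPrimitiveRoot ζ n) (hk : ¬ n ∣ k) (h : ζ ^ k * w = w) :
    w = 0 := by
  have hζk : ζ ^ k - 1 ≠ 0 := sub_ne_zero.mpr fun h₁ => hk ((hζ.pow_eq_one_iff_dvd k).mp h₁)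
  exact (mul_eq_zero.mp (by linear_combination h : (ζ ^ k - 1) * w = 0)).resolve_left hζk

def zeta8 : ℂ := exp (2 * Real.pi * I / 8)

theorem isPrimitiveRoot_zeta8 : IsPrimitiveRoot zeta8 8 :=
  isPrimitiveRoot_exp 8 (by norm_num)

theorem zeta8_eq : zeta8 = ⟨(Real.sqrt 2)⁻¹, (Real.sqrt 2)⁻¹⟩ := by
  have harg : 2 * Real.pi * I / 8 = ((Real.pi / 4 : ℝ) : ℂ) * I := by push_cast; ring
  have h : Real.sqrt 2 / 2 = (Real.sqrt 2)⁻¹ := by rw [Real.sqrt_div_self', one_div]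
  rw [zeta8, harg, exp_mul_I, ← ofReal_cos, ← ofReal_sin, Real.cos_pi_div_four,
    Real.sin_pi_div_four]
  apply Complex.ext <;> simpa using h

theorem zeta8_sq : zeta8 ^ 2 = I := by
  rw [zeta8, ← exp_nat_mul]
  convert exp_pi_div_two_mul_I using 2
  push_cast
  ring

def toComplexPair (z : Quaternion ℝ) : ℂ × ℂ := (⟨z.re, z.imJ⟩, ⟨z.imI, z.imK⟩)

theorem toComplexPair_injective : Function.Injective toComplexPair := by
  intro z w h
  simp only [toComplexPair, Prod.mk.injEq, Complex.mk.injEq] at h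
  ext <;> tauto

theorem toComplexPair_g (z : Quaternion ℝ) :
    toComplexPair (g z) = (zeta8 * (toComplexPair z).1, zeta8 ^ 3 * (toComplexPair z).2) := by
  rw [pow_succ, zeta8_sq]
  simp only [toComplexPair, g_eq, zeta8_eq, Prod.mk.injEq, Complex.ext_iff, Complex.mul_re,
    Complex.mul_im, I_re, I_im]
  refine ⟨⟨?_, ?_⟩, ?_, ?_⟩ <;> ring

theorem toComplexPair_iterate_g (z : Quaternion ℝ) (k : ℕ) :
    toComplexPair (g^[k] z) =
      (zeta8 ^ k * (toComplexPair z).1, zeta8 ^ (3 * k) * (toComplexPair z).2) := by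
  induction k with
  | zero => simp
  | succ k ih =>
    rw [Function.iterate_succ_apply', toComplexPair_g, ih]
    simp only [Prod.mk.injEq]
    constructor <;> ring

theorem eq_zero_of_iterate_g_eq_self {z : Quaternion ℝ} {k : ℕ} (hk₀ : 1 ≤ k) (hk₇ : k ≤ 7)
    (h : g^[k] z = z) : z = 0 := by
  have h' := congrArg toComplexPair h
  rw [toComplexPair_iterate_g] at h'
  obtain ⟨h₁, h₂⟩ := Prod.ext_iff.mp h'
  apply toComplexPair_injective
  ext1
  · exact isPrimitiveRoot_zeta8.eq_zero_of_pow_mul_eq_self (by omega) h₁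
  · exact isPrimitiveRoot_zeta8.eq_zero_of_pow_mul_eq_self (by omega) h₂

/-- The map `g : z ↦ √j · (j z j⁻¹)` acts freely on the unit quaternions:
`g^k(z) ≠ z` for every unit quaternion `z` and every `1 ≤ k ≤ 7`. -/
theorem g_free (z : Quaternion ℝ) (hz : ‖z‖ = 1) :
    ∀ k : ℕ, 1 ≤ k → k ≤ 7 → g^[k] z ≠ z := by
  intro k hk₀ hk₇ h
  have hz₀ := eq_zero_of_iterate_g_eq_self hk₀ hk₇ h
  simp [hz₀] at hz
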